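/- arXiv:2004.01490 — 2 statements merged into one kernel-verified Lean document; each statement's English description precedes it below -/
import Mathlib

section
/- For all real α, β ≠ 0, γ₁, γ₂, x, all λ₁, λ₂ ∈ ℕ with λ₁, λ₂ ≥ 1, and all n ≥ 0: Σ_{k=0}^{n} C(n,k) · A^{λ₁,x}_k(α,β,α+β+γ₁) · A^{λ₂,x}_{n-k}(α,β,γ₂) = A^{λ₁+λ₂,x}_n(α,β,α+β+γ₁+γ₂). -/
/-!
Put `T_n(k, γ) := Δ^k [s ↦ (βs + γ | -α)_n] (0) = (-1)^(n+k) β^k k! S(n, k; α, -β, -γ)`. Then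
`A^{λ,x}_n(α, β, γ) = Σ_k multichoose(λ, k) x^k T_n(k, γ)`, and `T_n(k, γ) = 0` for `k > n` because
`s ↦ (βs + γ | -α)_n` is a polynomial of degree at most `n`.

Since `Δ^(k₁ + k₂) = Δ^k₁ Δ^k₂`, the Vandermonde identity
`(u + v | δ)_n = Σ_m C(n, m) (u | δ)_m (v | δ)_(n-m)` gives
`Σ_m C(n, m) T_m(k₁, γ₁) T_(n-m)(k₂, γ₂) = T_n(k₁ + k₂, γ₁ + γ₂)`, while the coefficients
`multichoose(λ, k)` of `(1 - t)^(-λ)` convolve to those of `(1 - t)^(-(λ₁ + λ₂))`.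
-/

open Finset

/-- Generalized factorial polynomial `(t|α)_n = ∏_{j=0}^{n-1} (t - jα)`. -/
noncomputable def gfact (t α : ℝ) (n : ℕ) : ℝ := ∏ j ∈ Finset.range n, (t - j * α)

/-- Hsu–Shiue generalized Stirling numbers (explicit formula, β ≠ 0). -/
noncomputable def HS (n k : ℕ) (α β γ : ℝ) : ℝ :=
  (1 / (β ^ k * (Nat.factorial k : ℝ))) *
    ∑ s ∈ Finset.range (k + 1), (-1 : ℝ) ^ (k - s) * (Nat.choose k s : ℝ) * gfact (β * s + γ) α n

/-- Second-type higher order generalized geometric polynomials. -/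
noncomputable def A (lam : ℕ) (x : ℝ) (n : ℕ) (α β γ : ℝ) : ℝ :=
  ∑ k ∈ Finset.range (n + 1),
    (Nat.choose (k + lam - 1) k : ℝ) * (-1 : ℝ) ^ (n + k) * β ^ k * (Nat.factorial k : ℝ) *
      HS n k α (-β) (-γ) * x ^ k

open fwdDiff

theorem PowerSeries.coeff_invOneSubPow_val (S : Type*) [CommRing S] (d k : ℕ) :
    coeff k (invOneSubPow S d).val = d.multichoose k := by
  cases d with
  | zero => cases k <;> simp [invOneSubPow_zero, coeff_one, Nat.multichoose_zero_succ]
  | succ d =>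
    rw [invOneSubPow_val_succ_eq_mk_add_choose, coeff_mk, Nat.multichoose_eq,
      Nat.add_right_comm, Nat.add_sub_cancel, Nat.choose_symm_add]

theorem Nat.multichoose_add (a b k : ℕ) :
    (a + b).multichoose k = ∑ p ∈ antidiagonal k, a.multichoose p.1 * b.multichoose p.2 := by
  have h := congrArg (PowerSeries.coeff k ·)
    (congrArg Units.val (PowerSeries.invOneSubPow_add ℤ a b))
  simp only [Units.val_mul, PowerSeries.coeff_mul, PowerSeries.coeff_invOneSubPow_val] at h
  exact_mod_cast h

theorem sum_range_sum_range_eq_sum_antidiagonal {M : Type*} [AddCommMonoid M] (n : ℕ)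
    (g : ℕ → ℕ → M) (hg : ∀ i j, n < i + j → g i j = 0) :
    ∑ i ∈ range (n + 1), ∑ j ∈ range (n + 1), g i j =
      ∑ K ∈ range (n + 1), ∑ p ∈ antidiagonal K, g p.1 p.2 := by
  simp_rw [Nat.sum_antidiagonal_eq_sum_range_succ g, sum_range_diag_flip]
  refine sum_congr rfl fun i hi =>
    (sum_subset (range_subset_range.2 (by omega)) fun j _ hj => ?_).symm
  exact hg i j (by simp only [mem_range, not_lt] at hi hj; omega)

theorem fwdDiff_iter_add_apply_eq_sum {M R ι : Type*} [AddCommMonoid M] [CommRing R] (h : M)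
    (g : M → R) (s : Finset ι) (a b : ι → M → R) (hg : ∀ t u, g (t + u) = ∑ i ∈ s, a i t * b i u)
    (k₁ k₂ : ℕ) (y z : M) :
    Δ_[h] ^[k₁ + k₂] g (y + z) = ∑ i ∈ s, Δ_[h] ^[k₁] (a i) y * Δ_[h] ^[k₂] (b i) z := by
  have inner : (fun t => Δ_[h] ^[k₂] g (t + z)) = ∑ i ∈ s, Δ_[h] ^[k₂] (b i) z • a i := by
    ext t
    have hshift : (fun r => g (r + t)) = ∑ i ∈ s, a i t • b i := by
      ext r
      simp [hg, add_comm r t]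
    rw [add_comm t z, ← fwdDiff_iter_comp_add, hshift, fwdDiff_iter_finsetSum]
    simp [fwdDiff_iter_const_smul, mul_comm]
  rw [Function.iterate_add_apply, ← fwdDiff_iter_comp_add, inner, fwdDiff_iter_finsetSum]
  simp [fwdDiff_iter_const_smul, mul_comm]

theorem gfact_succ (t δ : ℝ) (n : ℕ) : gfact t δ (n + 1) = gfact t δ n * (t - n * δ) :=
  prod_range_succ _ n

theorem gfact_neg (t δ : ℝ) (n : ℕ) : gfact (-t) δ n = (-1) ^ n * gfact t (-δ) n := by
  have h := prod_neg (s := range n) fun j : ℕ => t - j * -δ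
  rw [card_range] at h
  rw [gfact, gfact, ← h]
  exact prod_congr rfl fun j _ => by ring

theorem gfact_add (u v δ : ℝ) (n : ℕ) :
    gfact (u + v) δ n =
      ∑ p ∈ antidiagonal n, (n.choose p.1 : ℝ) * gfact u δ p.1 * gfact v δ p.2 := by
  induction n with
  | zero => simp [gfact]
  | succ n ih =>
    simp only [mul_assoc] at ih ⊢
    rw [sum_antidiagonal_choose_succ_mul (fun i j => gfact u δ i * gfact v δ j), gfact_succ, ih,
      sum_mul, ← sum_add_distrib]
    refine sum_congr rfl fun p hp => ?_
    rw [HasAntidiagonal.mem_antidiagonal] at hp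
    rw [Nat.choose_symm_of_eq_add hp.symm, gfact_succ, gfact_succ, ← hp]
    push_cast
    ring

theorem gfact_mul_add_eq_eval (β γ δ : ℝ) (n : ℕ) :
    (fun s => gfact (β * s + γ) δ n) =
      (∏ j ∈ range n, (Polynomial.C β * Polynomial.X + Polynomial.C (γ - j * δ))).eval := by
  ext s
  simp [gfact, Polynomial.eval_prod, add_sub_assoc]

noncomputable def gfactDiff (β γ δ : ℝ) (n k : ℕ) : ℝ :=
  Δ_[1] ^[k] (fun s => gfact (β * s + γ) δ n) 0

theorem gfactDiff_eq_zero_of_lt (β γ δ : ℝ) {n k : ℕ} (h : n < k) : gfactDiff β γ δ n k = 0 := by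
  rw [gfactDiff, gfact_mul_add_eq_eval, Polynomial.fwdDiff_iter_eq_zero_of_degree_lt,
    Pi.zero_apply]
  refine (Polynomial.natDegree_prod_le _ _).trans_lt ?_
  calc _ ≤ ∑ _j ∈ range n, 1 := sum_le_sum fun j _ => Polynomial.natDegree_linear_le
    _ < k := by simpa using h

theorem sum_antidiagonal_choose_mul_gfactDiff (β γ₁ γ₂ δ : ℝ) (n k₁ k₂ : ℕ) :
    ∑ p ∈ antidiagonal n,
        (n.choose p.1 : ℝ) * gfactDiff β γ₁ δ p.1 k₁ * gfactDiff β γ₂ δ p.2 k₂ =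
      gfactDiff β (γ₁ + γ₂) δ n (k₁ + k₂) := by
  have hsplit : ∀ t u : ℝ, gfact (β * (t + u) + (γ₁ + γ₂)) δ n = ∑ p ∈ antidiagonal n,
      ((n.choose p.1 : ℝ) • fun s => gfact (β * s + γ₁) δ p.1) t * gfact (β * u + γ₂) δ p.2 := by
    intro t u
    rw [show β * (t + u) + (γ₁ + γ₂) = (β * t + γ₁) + (β * u + γ₂) by ring, gfact_add]
    simp [mul_assoc]
  rw [gfactDiff, ← add_zero (0 : ℝ), fwdDiff_iter_add_apply_eq_sum 1 _ _ _ _ hsplit]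
  simp [fwdDiff_iter_const_smul, gfactDiff, mul_assoc]

theorem neg_one_pow_mul_HS_eq_gfactDiff (α β γ : ℝ) (n k : ℕ) :
    (-1) ^ (n + k) * β ^ k * k.factorial * HS n k α (-β) (-γ) = gfactDiff β γ (-α) n k := by
  rcases eq_or_ne β 0 with rfl | hβ
  -- `HS n k α 0 _` divides by `0 ^ k`; for `k > 0` both sides vanish anyway.
  · cases k with
    | zero => simp [HS, gfactDiff, gfact_neg, ← mul_assoc, ← pow_add, Even.neg_one_pow ⟨n, rfl⟩]
    | succ k => simp [gfactDiff, fwdDiff_const, Function.iterate_fixed]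
  · rw [gfactDiff, fwdDiff_iter_eq_sum_shift, HS, mul_sum, mul_sum]
    refine sum_congr rfl fun s _ => ?_
    have hscalar :
        (-1) ^ (n + k) * β ^ k * k.factorial * (1 / ((-β) ^ k * k.factorial)) * (-1) ^ n =
          (1 : ℝ) := by
      rw [neg_pow β, pow_add]
      field_simp
      rw [pow_right_comm, neg_one_sq, one_pow]
    rw [show -β * s + -γ = -(β * s + γ) by ring, gfact_neg, zsmul_eq_mul, nsmul_one, zero_add]
    push_cast
    linear_combination ((-1) ^ (k - s) * (k.choose s : ℝ) * gfact (β * s + γ) (-α) n) * hscalar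

theorem A_eq_sum_multichoose_mul_gfactDiff (lam : ℕ) (x : ℝ) {n : ℕ} (α β γ : ℝ) {N : ℕ}
    (hN : n ≤ N) :
    A lam x n α β γ =
      ∑ k ∈ range (N + 1), (lam.multichoose k : ℝ) * x ^ k * gfactDiff β γ (-α) n k := by
  have hterm : ∀ k ∈ range (n + 1), (Nat.choose (k + lam - 1) k : ℝ) * (-1) ^ (n + k) * β ^ k *
      k.factorial * HS n k α (-β) (-γ) * x ^ k =
        (lam.multichoose k : ℝ) * x ^ k * gfactDiff β γ (-α) n k := fun k _ => by
    rw [← neg_one_pow_mul_HS_eq_gfactDiff, Nat.multichoose_eq, add_comm lam]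
    ring
  rw [A, sum_congr rfl hterm]
  refine sum_subset (range_subset_range.2 (by omega)) fun k _ hk => ?_
  rw [gfactDiff_eq_zero_of_lt _ _ _ (by simpa using hk), mul_zero]

theorem sum_antidiagonal_choose_mul_A (lam₁ lam₂ : ℕ) (x : ℝ) (n : ℕ) (α β γ₁ γ₂ : ℝ) :
    ∑ p ∈ antidiagonal n, (n.choose p.1 : ℝ) * A lam₁ x p.1 α β γ₁ * A lam₂ x p.2 α β γ₂ =
      A (lam₁ + lam₂) x n α β (γ₁ + γ₂) := by
  set c : ℕ → ℕ → ℝ := fun lam k => (lam.multichoose k : ℝ) * x ^ k with hc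
  calc _ = ∑ p ∈ antidiagonal n, ∑ i ∈ range (n + 1), ∑ j ∈ range (n + 1), c lam₁ i * c lam₂ j *
        ((n.choose p.1 : ℝ) * gfactDiff β γ₁ (-α) p.1 i * gfactDiff β γ₂ (-α) p.2 j) := by
        refine sum_congr rfl fun p hp => ?_
        have hp : p.1 + p.2 = n := by simpa using hp
        rw [A_eq_sum_multichoose_mul_gfactDiff (N := n) _ _ _ _ _ (by omega),
          A_eq_sum_multichoose_mul_gfactDiff (N := n) _ _ _ _ _ (by omega), mul_assoc,
          sum_mul_sum, mul_sum]
        refine sum_congr rfl fun i _ => ?_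
        rw [mul_sum]
        exact sum_congr rfl fun j _ => by ring
    _ = ∑ i ∈ range (n + 1), ∑ j ∈ range (n + 1),
          c lam₁ i * c lam₂ j * gfactDiff β (γ₁ + γ₂) (-α) n (i + j) := by
        rw [sum_comm]
        refine sum_congr rfl fun i _ => ?_
        rw [sum_comm]
        refine sum_congr rfl fun j _ => ?_
        rw [← mul_sum, sum_antidiagonal_choose_mul_gfactDiff]
    _ = ∑ K ∈ range (n + 1), ∑ p ∈ antidiagonal K,
          c lam₁ p.1 * c lam₂ p.2 * gfactDiff β (γ₁ + γ₂) (-α) n K := by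
        rw [sum_range_sum_range_eq_sum_antidiagonal]
        · refine sum_congr rfl fun K _ => sum_congr rfl fun p hp => ?_
          rw [(by simpa using hp : p.1 + p.2 = K)]
        · intro i j hij
          rw [gfactDiff_eq_zero_of_lt _ _ _ hij, mul_zero]
    _ = _ := by
        rw [A_eq_sum_multichoose_mul_gfactDiff (N := n) _ _ _ _ _ le_rfl]
        refine sum_congr rfl fun K _ => ?_
        rw [← sum_mul]
        congr 1
        rw [Nat.multichoose_add, Nat.cast_sum, sum_mul]
        refine sum_congr rfl fun p hp => ?_
        rw [hc, ← (by simpa using hp : p.1 + p.2 = K), pow_add]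
        push_cast
        ring

theorem stmt5_general (α β γ₁ γ₂ x : ℝ) (lam₁ lam₂ : ℕ) (n : ℕ) :
    ∑ k ∈ Finset.range (n + 1),
        (Nat.choose n k : ℝ) * A lam₁ x k α β (α + β + γ₁) * A lam₂ x (n - k) α β γ₂ =
      A (lam₁ + lam₂) x n α β (α + β + γ₁ + γ₂) := by
  rw [← Nat.sum_antidiagonal_eq_sum_range_succ
    (fun i j => (n.choose i : ℝ) * A lam₁ x i α β (α + β + γ₁) * A lam₂ x j α β γ₂)]
  exact sum_antidiagonal_choose_mul_A lam₁ lam₂ x n α β (α + β + γ₁) γ₂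

theorem stmt5 (α β γ₁ γ₂ x : ℝ) (hβ : β ≠ 0) (lam₁ lam₂ : ℕ)
    (h₁ : 1 ≤ lam₁) (h₂ : 1 ≤ lam₂) (n : ℕ) :
    ∑ k ∈ Finset.range (n + 1),
        (Nat.choose n k : ℝ) * A lam₁ x k α β (α + β + γ₁) * A lam₂ x (n - k) α β γ₂ =
      A (lam₁ + lam₂) x n α β (α + β + γ₁ + γ₂) :=
  stmt5_general α β γ₁ γ₂ x lam₁ lam₂ n
end

section
/- For all real α, β ≠ 0, r, x ≠ 0, all λ ∈ ℕ with λ ≥ 1, all m ≥ 0, and all n ≥ 0: (-1)^m · A^{λ,x}_{n+m}(α,β,r) = Σ_{k=0}^{m} S(m,k;α,-β,-r) · C(k+λ-1,k) · k! · (-βx)^k · A^{λ+k,x}_n(α,β,r+mα+kβ). -/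
open Finset

/-!
Write `A^{λ,x}_N(α,β,γ) = (-1)^N ∑_k C(k+λ-1,k) x^k Δ^k f_N(0)` with
`f_N(s) = (-βs-γ | α)_N`, using that `β^k k! S(N,k;α,β,γ)` is the `k`-th forward difference at `0`
of `s ↦ (βs+γ | α)_N`. Since `f_{n+m}` factors as `f_m · f'_n` with `γ` shifted by `mα`, the
Leibniz rule for `Δ` expands the left side into a double sum; the differences `Δ^k f_m` and
`Δ^i f'_n` vanish for `k > m`, `i > n` (these are polynomials of degree `m`, `n`), and
`C(k+i+λ-1,k+i) C(k+i,k) = C(k+λ-1,k) C(i+λ+k-1,i)` splits off the inner geometric polynomial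
`A^{λ+k,x}_n`, the shift by `k` of `f'_n` accounting for `γ ↦ γ + mα + kβ`.
-/

open fwdDiff

theorem sum_range_sum_antidiagonal_eq_sum_range_sum_range {M : Type*} [AddCommMonoid M]
    (m n : ℕ) (T : ℕ → ℕ → M) (hm : ∀ k i, m < k → T k i = 0) (hn : ∀ k i, n < i → T k i = 0) :
    ∑ K ∈ range (m + n + 1), ∑ ki ∈ antidiagonal K, T ki.1 ki.2 =
      ∑ k ∈ range (m + 1), ∑ i ∈ range (n + 1), T k i := by
  simp_rw [Nat.sum_antidiagonal_eq_sum_range_succ T, sum_range_diag_flip]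
  rw [← sum_subset (range_subset_range.2 (by omega : m + 1 ≤ m + n + 1))]
  · refine sum_congr rfl fun k hk => ?_
    rw [← sum_subset (range_subset_range.2 (by simp at hk; omega : n + 1 ≤ m + n + 1 - k))]
    intro i _ hi
    exact hn k i (by simpa using hi)
  · intro k _ hk
    exact sum_eq_zero fun i _ => hm k i (by simpa using hk)

theorem choose_add_pred_mul_choose (lam k i : ℕ) :
    (k + i + lam - 1).choose (k + i) * (k + i).choose k =
      (k + lam - 1).choose k * (i + (lam + k) - 1).choose i := by
  -- after multiplying by `k! i!`, both sides are the rising factorial `lam (lam+1) ⋯ (lam+k+i-1)`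
  have key := Nat.ascFactorial_mul_ascFactorial lam k i
  simp only [Nat.ascFactorial_eq_factorial_mul_choose',
    ← Nat.add_choose_mul_factorial_mul_factorial k i] at key
  rw [show k + i + lam - 1 = lam + (k + i) - 1 by omega, show k + lam - 1 = lam + k - 1 by omega,
    show i + (lam + k) - 1 = lam + k + i - 1 by omega]
  rw [← Nat.choose_symm_add, ← add_assoc] at key
  apply Nat.eq_of_mul_eq_mul_left (Nat.mul_pos k.factorial_pos i.factorial_pos)
  ring_nf at key ⊢
  linarith

section GeometricDiffSum

variable {M R : Type*} [AddCommMonoid M] [CommRing R] (h : M)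

theorem fwdDiff_mul (f g : M → R) :
    Δ_[h] (f * g) = f * Δ_[h] g + Δ_[h] f * fun y => g (y + h) := by
  ext y
  simp only [fwdDiff, Pi.mul_apply, Pi.add_apply]
  ring

theorem fwdDiff_iter_mul (f g : M → R) (n : ℕ) (y : M) :
    Δ_[h] ^[n] (f * g) y = ∑ ij ∈ antidiagonal n,
      n.choose ij.1 * (Δ_[h] ^[ij.1] f y * Δ_[h] ^[ij.2] g (y + ij.1 • h)) := by
  induction n generalizing f g with
  | zero => simp
  | succ n ih =>
    rw [Function.iterate_succ_apply, fwdDiff_mul, fwdDiff_iter_add, Pi.add_apply, ih, ih,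
      sum_antidiagonal_choose_succ_mul (fun i j => Δ_[h] ^[i] f y * Δ_[h] ^[j] g (y + i • h))]
    congr 1
    refine sum_congr rfl fun ij hij => ?_
    rw [Nat.choose_symm_of_eq_add (mem_antidiagonal.1 hij).symm, ← Function.iterate_succ_apply,
      fwdDiff_iter_comp_add, succ_nsmul, add_assoc]

noncomputable def geometricDiffSum (lam : ℕ) (x : R) (f : M → R) (N : ℕ) (y : M) : R :=
  ∑ k ∈ range (N + 1), ((k + lam - 1).choose k : R) * x ^ k * Δ_[h] ^[k] f y

theorem geometricDiffSum_mul {m n : ℕ} {f g : M → R} (hf : ∀ k, m < k → Δ_[h] ^[k] f = 0)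
    (hg : ∀ i, n < i → Δ_[h] ^[i] g = 0) (lam : ℕ) (x : R) (y : M) :
    geometricDiffSum h lam x (f * g) (m + n) y =
      ∑ k ∈ range (m + 1), ((k + lam - 1).choose k : R) * x ^ k * Δ_[h] ^[k] f y *
        geometricDiffSum h (lam + k) x g n (y + k • h) := by
  set T : ℕ → ℕ → R := fun k i => (((k + i + lam - 1).choose (k + i) * (k + i).choose k : ℕ) : R) *
    x ^ (k + i) * Δ_[h] ^[k] f y * Δ_[h] ^[i] g (y + k • h)
  calc geometricDiffSum h lam x (f * g) (m + n) y
      = ∑ K ∈ range (m + n + 1), ∑ ki ∈ antidiagonal K, T ki.1 ki.2 := by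
        refine sum_congr rfl fun K _ => ?_
        rw [fwdDiff_iter_mul, mul_sum]
        refine sum_congr rfl fun ki hki => ?_
        rw [← mem_antidiagonal.1 hki]
        simp only [T, Nat.cast_mul]
        ring
    _ = ∑ k ∈ range (m + 1), ∑ i ∈ range (n + 1), T k i := by
        refine sum_range_sum_antidiagonal_eq_sum_range_sum_range m n T (fun k i hk => ?_)
          (fun k i hi => ?_)
        · simp only [T, hf k hk, Pi.zero_apply, mul_zero, zero_mul]
        · simp only [T, hg i hi, Pi.zero_apply, mul_zero]
    _ = _ := by
        refine sum_congr rfl fun k _ => ?_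
        rw [geometricDiffSum, mul_sum]
        refine sum_congr rfl fun i _ => ?_
        simp only [T, choose_add_pred_mul_choose, Nat.cast_mul, pow_add]
        ring

theorem geometricDiffSum_comp_add (lam : ℕ) (x : R) (f : M → R) (N : ℕ) (z y : M) :
    geometricDiffSum h lam x (fun y => f (y + z)) N y = geometricDiffSum h lam x f N (y + z) := by
  simp only [geometricDiffSum, fwdDiff_iter_comp_add]

end GeometricDiffSum

theorem gfact_add_s12 (t α : ℝ) (m n : ℕ) :
    gfact t α (m + n) = gfact t α m * gfact (t - m * α) α n := by
  simp only [gfact, prod_range_add]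
  congr 1
  refine prod_congr rfl fun j _ => ?_
  push_cast
  ring

open Polynomial in
theorem gfact_affine_eq_eval (b c α s : ℝ) (n : ℕ) :
    gfact (b * s + c) α n = (∏ j ∈ range n, (C b * X + C (c - j * α))).eval s := by
  simp only [gfact, eval_prod, eval_add, eval_mul, eval_C, eval_X]
  exact prod_congr rfl fun j _ => by ring

open Polynomial in
theorem fwdDiff_iter_gfact_affine_eq_zero (b c α : ℝ) {n k : ℕ} (hk : n < k) :
    Δ_[1] ^[k] (fun s => gfact (b * s + c) α n) = 0 := by
  have hdeg : (∏ j ∈ range n, (C b * X + C (c - j * α))).natDegree ≤ n :=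
    (natDegree_prod_le _ _).trans <| (sum_le_sum fun _ _ => natDegree_linear_le).trans (by simp)
  simp_rw [gfact_affine_eq_eval]
  exact fwdDiff_iter_eq_zero_of_degree_lt (hdeg.trans_lt hk)

theorem pow_mul_factorial_mul_HS (n k : ℕ) (α β γ : ℝ) :
    β ^ k * k.factorial * HS n k α β γ = Δ_[1] ^[k] (fun s => gfact (β * s + γ) α n) 0 := by
  -- for `β = 0`, `HS` divides by `0`; both sides vanish once `k ≥ 1`
  rcases eq_or_ne β 0 with rfl | hβ
  · rcases k.eq_zero_or_pos with rfl | hk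
    · simp [HS]
    · have hconst : (fun s : ℝ => gfact (0 * s + γ) α n) = (Polynomial.C (gfact γ α n)).eval := by
        ext s
        simp
      rw [zero_pow hk.ne', zero_mul, zero_mul, hconst,
        Polynomial.fwdDiff_iter_eq_zero_of_degree_lt (by simpa using hk), Pi.zero_apply]
  · rw [HS, fwdDiff_iter_eq_sum_shift, ← mul_assoc, mul_one_div_cancel (by positivity), one_mul]
    simp [zsmul_eq_mul]

theorem A_eq_neg_one_pow_mul_geometricDiffSum (lam : ℕ) (x : ℝ) (N : ℕ) (α β γ : ℝ) :
    A lam x N α β γ =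
      (-1) ^ N * geometricDiffSum 1 lam x (fun s => gfact (-β * s + -γ) α N) N 0 := by
  rw [A, geometricDiffSum, mul_sum]
  refine sum_congr rfl fun k _ => ?_
  rw [← pow_mul_factorial_mul_HS, neg_pow β, pow_add]
  ring

theorem stmt12_general (α β r x : ℝ) (lam : ℕ) (m n : ℕ) :
    (-1 : ℝ) ^ m * A lam x (n + m) α β r =
      ∑ k ∈ Finset.range (m + 1),
        HS m k α (-β) (-r) * (Nat.choose (k + lam - 1) k : ℝ) * (Nat.factorial k : ℝ) *
          (-β * x) ^ k * A (lam + k) x n α β (r + m * α + k * β) := by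
  set P : ℝ → ℝ := fun s => gfact (-β * s + -r) α m
  set Q : ℝ → ℝ := fun s => gfact (-β * s + -(r + m * α)) α n
  have hPQ : (fun s => gfact (-β * s + -r) α (n + m)) = P * Q := by
    ext s
    rw [Pi.mul_apply, add_comm n, gfact_add_s12]
    congr 2
    ring
  have hQ (k : ℕ) : (fun s => gfact (-β * s + -(r + m * α + k * β)) α n) = fun s => Q (s + k) := by
    ext s
    congr 1
    ring
  have hsign : (-1 : ℝ) ^ m * (-1) ^ (n + m) = (-1) ^ n := by
    rw [pow_add, mul_left_comm, ← pow_add, ← two_mul, pow_mul, neg_one_sq, one_pow, mul_one]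
  rw [A_eq_neg_one_pow_mul_geometricDiffSum, hPQ, ← mul_assoc, hsign, add_comm n,
    geometricDiffSum_mul 1 (fun k => fwdDiff_iter_gfact_affine_eq_zero _ _ _)
      (fun i => fwdDiff_iter_gfact_affine_eq_zero _ _ _), mul_sum]
  refine sum_congr rfl fun k _ => ?_
  rw [A_eq_neg_one_pow_mul_geometricDiffSum, hQ, geometricDiffSum_comp_add,
    ← pow_mul_factorial_mul_HS]
  simp only [zero_add, nsmul_one]
  ring

theorem stmt12 (α β r x : ℝ) (hβ : β ≠ 0) (hx : x ≠ 0) (lam : ℕ) (hlam : 1 ≤ lam) (m n : ℕ) :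
    (-1 : ℝ) ^ m * A lam x (n + m) α β r =
      ∑ k ∈ Finset.range (m + 1),
        HS m k α (-β) (-r) * (Nat.choose (k + lam - 1) k : ℝ) * (Nat.factorial k : ℝ) *
          (-β * x) ^ k * A (lam + k) x n α β (r + m * α + k * β) :=
  stmt12_general α β r x lam m n
end
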